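/- For distinct lines ℓ and ℓ' in ℍ^n, the composite r_ℓ ∘ r_{ℓ'} of the reflections of order 2 in ℓ and ℓ' has order 3 (as an invertible ℍ-linear map) if and only if the angle between ℓ and ℓ' is π/3. -/

import Mathlib

noncomputable section

local notation "ℍ" => Quaternion ℝ

/-- The standard Hermitian form on `ℍⁿ`, conjugate-linear in the first variable and
ℍ-linear in the second: `⟨x,y⟩ = ∑ i, star (x i) * y i`. -/
def qInner {n : ℕ} (x y : Fin n → ℍ) : ℍ := ∑ i, star (x i) * y i

/-- The norm `|v| = √⟨v,v⟩` on `ℍⁿ`. -/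
def qNorm {n : ℕ} (v : Fin n → ℍ) : ℝ := Real.sqrt (qInner v v).re

/-- The ℍ-line `vℍ` spanned by `v` (the set of right scalar multiples of `v`). -/
def lineOf {n : ℕ} (v : Fin n → ℍ) : Set (Fin n → ℍ) := {w | ∃ c : ℍ, w = fun i => v i * c}

/-- `ℓ` and `ℓ'` are at angle `θ ∈ [0, π/2]`: for all nonzero `v ∈ ℓ`, `w ∈ ℓ'`,
`|⟨v,w⟩| = cos θ · |v|·|w|`. -/
def atAngle {n : ℕ} (ℓ ℓ' : Set (Fin n → ℍ)) (θ : ℝ) : Prop :=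
  ∀ v ∈ ℓ, ∀ w ∈ ℓ', v ≠ 0 → w ≠ 0 → ‖qInner v w‖ = Real.cos θ * (qNorm v * qNorm w)

/-- The reflection of order 2 in the line `αℍ`: `r(v) = v − α·(2/⟨α,α⟩)·⟨α,v⟩`. -/
def reflectIn {n : ℕ} (α : Fin n → ℍ) (v : Fin n → ℍ) : Fin n → ℍ :=
  fun i => v i - α i * ((2 / qInner α α) * qInner α v)

/-! The reflections `r = r_ℓ` and `s = r_ℓ'` are involutions, so `rs` has order 3 exactly when
`r ≠ s` and the braid relation `rsr = srs` holds. Since reflections preserve the Hermitian form,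
`rsr` and `srs` are the reflections in the lines `r(ℓ')` and `s(ℓ)`, and a reflection determines
its line. So everything reduces to deciding when `r_w v ∈ (r_v w)ℍ`; expanding in the independent
vectors `v, w`, this says `(2/|v|²)⟨v,w⟩ · (2/|w|²)⟨w,v⟩ = 1`, i.e. `|⟨v,w⟩| = |v||w|/2`. -/

lemma orderOf_mul_eq_three_iff {M : Type*} [Monoid M] {r s : M} (hr : r * r = 1)
    (hs : s * s = 1) : orderOf (r * s) = 3 ↔ r * s * r = s * r * s ∧ r ≠ s := by
  have hr' (x : M) : r * (r * x) = x := by rw [← mul_assoc, hr, one_mul]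
  have hs' (x : M) : s * (s * x) = x := by rw [← mul_assoc, hs, one_mul]
  have hcube : (r * s) ^ 3 = r * s * r * (s * r * s) := by simp only [pow_three, mul_assoc]
  have hsrs : s * r * s * (s * r * s) = 1 := by simp only [mul_assoc, hs', hr', hs]
  rw [orderOf_eq_prime_iff, hcube]
  refine and_congr ⟨fun h => ?_, fun h => by rw [h, hsrs]⟩ (not_congr ⟨fun h => ?_, fun h => ?_⟩)
  · calc r * s * r = r * s * r * (s * r * s) * (s * r * s) := by
          rw [mul_assoc _ (s * r * s), hsrs, mul_one]
      _ = s * r * s := by rw [h, one_mul]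
  · calc r = r * s * s := by rw [mul_assoc, hs, mul_one]
      _ = s := by rw [h, one_mul]
  · rw [h, hs]

section

variable {n : ℕ}

lemma star_qInner (x y : Fin n → ℍ) : star (qInner x y) = qInner y x := by
  simp [qInner, star_sum, star_mul]

lemma qInner_mul_right (x y : Fin n → ℍ) (q : ℍ) :
    qInner x (fun i => y i * q) = qInner x y * q := by
  simp only [qInner, Finset.sum_mul, mul_assoc]

lemma qInner_mul_left (x y : Fin n → ℍ) (q : ℍ) :
    qInner (fun i => x i * q) y = star q * qInner x y := by
  simp only [qInner, Finset.mul_sum, star_mul, mul_assoc]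

lemma qInner_sub_right (x y z : Fin n → ℍ) :
    qInner x (fun i => y i - z i) = qInner x y - qInner x z := by
  simp only [qInner, mul_sub, Finset.sum_sub_distrib]

lemma qInner_sub_left (x y z : Fin n → ℍ) :
    qInner (fun i => x i - y i) z = qInner x z - qInner y z := by
  simp only [qInner, star_sub, sub_mul, Finset.sum_sub_distrib]

@[simp] lemma qInner_zero_left (x : Fin n → ℍ) : qInner 0 x = 0 := by
  simp [qInner]

@[simp] lemma qInner_zero_right (x : Fin n → ℍ) : qInner x 0 = 0 := by
  simp [qInner]

lemma qInner_self_eq_sum (x : Fin n → ℍ) :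
    qInner x x = ((∑ i, Quaternion.normSq (x i) : ℝ) : ℍ) := by
  simp only [qInner, Quaternion.star_mul_self, ← Quaternion.algebraMap_def, map_sum]

lemma qInner_self (x : Fin n → ℍ) : qInner x x = ((qNorm x ^ 2 : ℝ) : ℍ) := by
  rw [qNorm, qInner_self_eq_sum, Quaternion.re_coe,
    Real.sq_sqrt (Finset.sum_nonneg fun i _ => Quaternion.normSq_nonneg)]

lemma qNorm_nonneg (x : Fin n → ℍ) : 0 ≤ qNorm x := Real.sqrt_nonneg _

lemma qNorm_pos {x : Fin n → ℍ} (hx : x ≠ 0) : 0 < qNorm x := by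
  obtain ⟨i, hi⟩ := Function.ne_iff.mp hx
  rw [qNorm, qInner_self_eq_sum, Quaternion.re_coe, Real.sqrt_pos]
  exact Finset.sum_pos' (fun i _ => Quaternion.normSq_nonneg) ⟨i, Finset.mem_univ i,
    Quaternion.normSq_nonneg.lt_of_ne' (Quaternion.normSq_ne_zero.mpr hi)⟩

lemma qNorm_mul_right (x : Fin n → ℍ) (q : ℍ) :
    qNorm (fun i => x i * q) = qNorm x * ‖q‖ := by
  rw [qNorm, qInner_mul_left, qInner_mul_right, qInner_self, Quaternion.coe_mul_eq_smul,
    mul_smul_comm, Quaternion.star_mul_self, Quaternion.smul_coe, Quaternion.re_coe,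
    Quaternion.normSq_eq_norm_mul_self, ← sq, ← mul_pow,
    Real.sqrt_sq (mul_nonneg (qNorm_nonneg x) (norm_nonneg q))]

lemma self_mem_lineOf (v : Fin n → ℍ) : v ∈ lineOf v := ⟨1, by simp⟩

lemma zero_mem_lineOf (v : Fin n → ℍ) : 0 ∈ lineOf v := ⟨0, by funext i; simp⟩

lemma lineOf_eq_of_mem {a b : Fin n → ℍ} (hb : b ≠ 0) (h : b ∈ lineOf a) :
    lineOf b = lineOf a := by
  obtain ⟨d, rfl⟩ := h
  have hd : d ≠ 0 := by rintro rfl; exact hb (by funext i; simp)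
  ext x
  constructor
  · rintro ⟨e, rfl⟩
    exact ⟨d * e, by funext i; simp [mul_assoc]⟩
  · rintro ⟨e, rfl⟩
    exact ⟨d⁻¹ * e, by funext i; simp [mul_assoc, mul_inv_cancel_left₀ hd]⟩

lemma eq_zero_of_mul_add_mul_eq_zero {v w : Fin n → ℍ} (hv : v ≠ 0) (hwv : w ∉ lineOf v)
    {p q : ℍ} (h : ∀ i, v i * p + w i * q = 0) : p = 0 ∧ q = 0 := by
  have hq : q = 0 := by
    by_contra hq
    refine hwv ⟨-(p * q⁻¹), funext fun i => ?_⟩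
    calc w i = w i * q * q⁻¹ := (mul_inv_cancel_right₀ hq _).symm
      _ = v i * -(p * q⁻¹) := by
        rw [eq_neg_of_add_eq_zero_right (h i)]; noncomm_ring
  obtain ⟨i, hi⟩ := Function.ne_iff.mp hv
  have hvp := h i
  rw [hq, mul_zero, add_zero] at hvp
  exact ⟨(mul_eq_zero.mp hvp).resolve_left hi, hq⟩

lemma sub_mul_mem_lineOf_sub_mul_iff {v w : Fin n → ℍ} (hv : v ≠ 0) (hwv : w ∉ lineOf v)
    (x y : ℍ) :
    (fun i => v i - w i * y) ∈ lineOf (fun i => w i - v i * x) ↔ x * y = 1 := by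
  constructor
  · rintro ⟨d, hd⟩
    obtain ⟨hp, hq⟩ := eq_zero_of_mul_add_mul_eq_zero hv hwv (p := 1 + x * d) (q := -y - d)
      fun i => by
        calc v i * (1 + x * d) + w i * (-y - d)
            = (v i - w i * y) - (w i - v i * x) * d := by noncomm_ring
          _ = 0 := sub_eq_zero.mpr (congrFun hd i)
    rw [← sub_eq_zero.mp hq, mul_neg, ← sub_eq_add_neg, sub_eq_zero] at hp
    exact hp.symm
  · intro hxy
    refine ⟨-y, funext fun i => ?_⟩
    simp only [sub_mul, mul_neg, mul_assoc, hxy, mul_one]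
    abel

lemma reflectIn_eq (α x : Fin n → ℍ) :
    reflectIn α x = fun i => x i - α i * ((2 / qNorm α ^ 2) • qInner α x) := by
  funext i
  rw [reflectIn, qInner_self, ← Quaternion.coe_mul_eq_smul, Quaternion.coe_div]
  rfl

@[simp] lemma reflectIn_zero_left (x : Fin n → ℍ) : reflectIn 0 x = x := by
  funext i; simp [reflectIn]

@[simp] lemma reflectIn_zero_right (α : Fin n → ℍ) : reflectIn α 0 = 0 := by
  funext i; simp [reflectIn]

lemma qInner_reflectIn_self (α x : Fin n → ℍ) : qInner α (reflectIn α x) = -qInner α x := by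
  rcases eq_or_ne α 0 with rfl | hα
  · simp
  rw [reflectIn_eq, qInner_sub_right, qInner_mul_right, qInner_self,
    Quaternion.coe_mul_eq_smul, smul_smul, mul_div_cancel₀ _ (pow_ne_zero 2 (qNorm_pos hα).ne')]
  module

lemma reflectIn_reflectIn (α x : Fin n → ℍ) : reflectIn α (reflectIn α x) = x := by
  rw [reflectIn_eq α (reflectIn α x), qInner_reflectIn_self, reflectIn_eq]
  funext i
  simp

lemma reflectIn_self {α : Fin n → ℍ} (hα : α ≠ 0) : reflectIn α α = -α := by
  rw [reflectIn_eq, qInner_self, Quaternion.smul_coe,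
    div_mul_cancel₀ _ (pow_ne_zero 2 (qNorm_pos hα).ne')]
  funext i
  rw [Pi.neg_apply, Quaternion.mul_coe_eq_smul]
  module

lemma reflectIn_sub_mul (α x y : Fin n → ℍ) (q : ℍ) :
    reflectIn α (fun i => x i - y i * q) = fun i => reflectIn α x i - reflectIn α y i * q := by
  simp only [reflectIn_eq, qInner_sub_right, qInner_mul_right, smul_sub]
  funext i
  noncomm_ring

lemma qInner_reflectIn_reflectIn (α x y : Fin n → ℍ) :
    qInner (reflectIn α x) (reflectIn α y) = qInner x y := by
  rcases eq_or_ne α 0 with rfl | hα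
  · simp
  rw [reflectIn_eq, reflectIn_eq, qInner_sub_left, qInner_sub_right, qInner_sub_right,
    qInner_mul_left, qInner_mul_left, qInner_mul_right, qInner_mul_right, qInner_self]
  simp only [Quaternion.star_smul, star_qInner, Quaternion.coe_mul_eq_smul, mul_smul_comm,
    smul_mul_assoc, smul_smul]
  have hA : qNorm α ≠ 0 := (qNorm_pos hα).ne'
  match_scalars
  · rfl
  · field_simp
    ring

lemma qNorm_reflectIn (α x : Fin n → ℍ) : qNorm (reflectIn α x) = qNorm x := by
  rw [qNorm, qInner_reflectIn_reflectIn, qNorm]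

lemma qInner_reflectIn_left (α x y : Fin n → ℍ) :
    qInner (reflectIn α x) y = qInner x (reflectIn α y) := by
  rw [← qInner_reflectIn_reflectIn α x, reflectIn_reflectIn]

lemma reflectIn_reflectIn_reflectIn (α β x : Fin n → ℍ) :
    reflectIn β (reflectIn α (reflectIn β x)) = reflectIn (reflectIn β α) x := by
  rw [reflectIn_eq α, reflectIn_sub_mul, reflectIn_reflectIn, reflectIn_eq (reflectIn β α),
    qNorm_reflectIn, qInner_reflectIn_left]

lemma reflectIn_mul_right (α : Fin n → ℍ) {d : ℍ} (hd : d ≠ 0) :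
    reflectIn (fun i => α i * d) = reflectIn α := by
  funext x i
  simp only [reflectIn_eq, qNorm_mul_right, qInner_mul_left]
  rw [mul_assoc, mul_smul_comm, ← mul_assoc d, Quaternion.self_mul_star,
    Quaternion.normSq_eq_norm_mul_self, Quaternion.coe_mul_eq_smul, smul_smul, mul_pow, ← div_div,
    ← sq, div_mul_cancel₀ _ (pow_ne_zero 2 (norm_ne_zero_iff.mpr hd))]

lemma reflectIn_ne_zero (α : Fin n → ℍ) {x : Fin n → ℍ} (hx : x ≠ 0) : reflectIn α x ≠ 0 :=
  fun h => hx (by rw [← reflectIn_reflectIn α x, h, reflectIn_zero_right])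

lemma reflectIn_mem_lineOf_reflectIn_iff {v w : Fin n → ℍ} (hv : v ≠ 0) (hwv : w ∉ lineOf v) :
    reflectIn w v ∈ lineOf (reflectIn v w) ↔ ‖qInner v w‖ = qNorm v * qNorm w / 2 := by
  have hw : w ≠ 0 := by rintro rfl; exact hwv (zero_mem_lineOf v)
  rw [reflectIn_eq w v, reflectIn_eq v w, sub_mul_mem_lineOf_sub_mul_iff hv hwv,
    smul_mul_smul_comm, ← star_qInner v w, Quaternion.self_mul_star, Quaternion.smul_coe,
    ← Quaternion.coe_one, Quaternion.coe_inj, Quaternion.normSq_eq_norm_mul_self]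
  have := qNorm_pos hv
  have := qNorm_pos hw
  rw [← pow_left_inj₀ (norm_nonneg _) (by positivity) two_ne_zero]
  field_simp

lemma atAngle_lineOf_iff {v w : Fin n → ℍ} (hv : v ≠ 0) (hw : w ≠ 0) (θ : ℝ) :
    atAngle (lineOf v) (lineOf w) θ ↔ ‖qInner v w‖ = Real.cos θ * (qNorm v * qNorm w) := by
  refine ⟨fun h => h v (self_mem_lineOf v) w (self_mem_lineOf w) hv hw, ?_⟩
  rintro h _ ⟨c, rfl⟩ _ ⟨d, rfl⟩ - -
  rw [qInner_mul_left, qInner_mul_right, norm_mul, norm_mul, Quaternion.norm_star,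
    qNorm_mul_right, qNorm_mul_right, h]
  ring

-- In `Function.End`, `*` is composition; on plain functions it would be the pointwise product.
def reflectInEnd (α : Fin n → ℍ) : Function.End (Fin n → ℍ) := reflectIn α

lemma reflectInEnd_mul_self (α : Fin n → ℍ) : reflectInEnd α * reflectInEnd α = 1 :=
  funext (reflectIn_reflectIn α)

lemma reflectInEnd_mul_mul (α β : Fin n → ℍ) :
    reflectInEnd β * reflectInEnd α * reflectInEnd β = reflectInEnd (reflectIn β α) :=
  funext (reflectIn_reflectIn_reflectIn α β)

lemma reflectInEnd_inj {a b : Fin n → ℍ} (hb : b ≠ 0) :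
    reflectInEnd a = reflectInEnd b ↔ b ∈ lineOf a := by
  unfold reflectInEnd
  constructor
  · intro h
    have hab := congrFun h b
    rw [reflectIn_self hb, reflectIn_eq] at hab
    refine ⟨(1 / 2 : ℝ) • ((2 / qNorm a ^ 2) • qInner a b), funext fun i => ?_⟩
    have hi : b i - a i * _ = -b i := congrFun hab i
    rw [mul_smul_comm]
    linear_combination (norm := module) (1 / 2 : ℝ) • hi
  · rintro ⟨d, rfl⟩
    have hd : d ≠ 0 := by rintro rfl; exact hb (by funext i; simp)
    exact (reflectIn_mul_right a hd).symm

end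

/-- For distinct lines `ℓ = vℍ` and `ℓ' = wℍ`, the composite `r_ℓ ∘ r_{ℓ'}` of the order-2 reflections has order 3 (as an invertible ℍ-linear map) iff the angle between `ℓ` and `ℓ'` is `π/3`. -/
theorem reflections_product_order_3 (n : ℕ) (v w : Fin n → ℍ)
    (hv : v ≠ 0) (hw : w ≠ 0) (hne : lineOf v ≠ lineOf w) :
    orderOf (show Function.End (Fin n → ℍ) from reflectIn v ∘ reflectIn w) = 3 ↔
      atAngle (lineOf v) (lineOf w) (Real.pi / 3) := by
  have hwv : w ∉ lineOf v := fun h => hne (lineOf_eq_of_mem hw h).symm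
  have hvw : reflectInEnd v ≠ reflectInEnd w := fun h => hwv ((reflectInEnd_inj hw).1 h)
  have hG : (show Function.End (Fin n → ℍ) from reflectIn v ∘ reflectIn w) =
      reflectInEnd v * reflectInEnd w := rfl
  rw [hG, orderOf_mul_eq_three_iff (reflectInEnd_mul_self v) (reflectInEnd_mul_self w),
    and_iff_left hvw, reflectInEnd_mul_mul, reflectInEnd_mul_mul,
    reflectInEnd_inj (reflectIn_ne_zero w hv), reflectIn_mem_lineOf_reflectIn_iff hv hwv,
    atAngle_lineOf_iff hv hw, Real.cos_pi_div_three, one_div_mul_eq_div]
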